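/- Let v ≥ 1 and let f : ℝ^v → ℝ^v be continuously differentiable. Assume that for every choice of points χ₁, …, χ_v ∈ ℝ^v, the v×v matrix whose i-th row is the gradient of the i-th component of f evaluated at χ_i is invertible. Then f is injective on all of ℝ^v. -/

import Mathlib

/-! If `f a = f b` with `a ≠ b`, the mean value theorem applied to each coordinate `fᵢ` on the
segment `[a, b]` yields a point `χ i` with `(D f (χ i) (b - a))ᵢ = 0`. The mixed-point Jacobian
at these points then annihilates the nonzero vector `b - a`, so it is not invertible. -/

open Matrix

noncomputable section

variable {𝕜 : Type*} [NontriviallyNormedField 𝕜] {m n : Type*} [Fintype n] [DecidableEq n]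

def mixedJacobian (f : (n → 𝕜) → m → 𝕜) (χ : m → n → 𝕜) : Matrix m n 𝕜 :=
  Matrix.of fun i j => fderiv 𝕜 f (χ i) (Pi.single j 1) i

theorem mixedJacobian_mulVec [Fintype m] (f : (n → 𝕜) → m → 𝕜) (χ : m → n → 𝕜) (x : n → 𝕜) :
    mixedJacobian f χ *ᵥ x = fun i => fderiv 𝕜 f (χ i) x i := by
  ext i
  exact congrFun (LinearMap.toMatrix'_mulVec (fderiv 𝕜 f (χ i)).toLinearMap x) i

end

theorem exists_fderiv_apply_eq_zero_of_eq {E ι : Type*} [NormedAddCommGroup E] [NormedSpace ℝ E]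
    [Fintype ι] {f : E → ι → ℝ} (hf : Differentiable ℝ f) {a b : E} (hab : f a = f b) (i : ι) :
    ∃ c, fderiv ℝ f c (b - a) i = 0 := by
  have hfi : ∀ x ∈ Set.univ, HasFDerivWithinAt (fun x => f x i)
      ((ContinuousLinearMap.proj i).comp (fderiv ℝ f x)) Set.univ x :=
    fun x _ => (hasFDerivAt_pi'.1 (hf x).hasFDerivAt i).hasFDerivWithinAt
  obtain ⟨c, -, hc⟩ := domain_mvt hfi convex_univ (Set.mem_univ a) (Set.mem_univ b)
  exact ⟨c, by simpa [hab] using hc.symm⟩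

theorem injective_of_mixed_jacobian_invertible_general
    (v : ℕ) (f : (Fin v → ℝ) → Fin v → ℝ)
    (hf : ContDiff ℝ 1 f)
    (hM : ∀ χ : Fin v → (Fin v → ℝ),
      IsUnit (Matrix.of fun i j => fderiv ℝ f (χ i) (Pi.single j 1) i)) :
    Function.Injective f := by
  intro a b hab
  choose χ hχ using exists_fderiv_apply_eq_zero_of_eq (hf.differentiable one_ne_zero) hab
  have hker : mixedJacobian f χ *ᵥ (b - a) = 0 := by
    rw [mixedJacobian_mulVec]
    exact funext hχ
  have hunit : IsUnit (mixedJacobian f χ) := hM χ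
  have hba : b - a = 0 :=
    mulVec_injective_iff_isUnit.2 hunit (by rw [hker, mulVec_zero])
  exact (sub_eq_zero.1 hba).symm

/-- If `f : ℝ^v → ℝ^v` is C¹ and every "mixed-point Jacobian" (the matrix whose
`i`-th row is the gradient of `fᵢ` evaluated at its own point `χ i`) is invertible,
then `f` is injective on all of `ℝ^v`. -/
theorem injective_of_mixed_jacobian_invertible
    (v : ℕ) (hv : 1 ≤ v) (f : (Fin v → ℝ) → Fin v → ℝ)
    (hf : ContDiff ℝ 1 f)
    (hM : ∀ χ : Fin v → (Fin v → ℝ),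
      IsUnit (Matrix.of fun i j => fderiv ℝ f (χ i) (Pi.single j 1) i)) :
    Function.Injective f :=
  injective_of_mixed_jacobian_invertible_general v f hf hM
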